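/- Suppose Assumptions A1, A2 and R1 hold, f and g are jointly continuous, Θ is compact, and fix data (u_i, y_i) with u_i ∈ 𝒰. Then for every d > 0 there exist E > 0 and Z > 0 such that: for all z with 0 ≤ z ≤ Z and all ε with 0 ≤ ε ≤ E, every θ̂ ∈ z-argmin{ Q_n(θ; ε) : θ ∈ Θ } satisfies dist(θ̂, argmin{ Q_n(θ) : θ ∈ Θ }) < d. -/

import Mathlib

open Set Metric Filter MeasureTheory ProbabilityTheory

noncomputable section

/-- Euclidean space ℝ^k. -/
abbrev Euc (k : ℕ) := EuclideanSpace ℝ (Fin k)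

/-- Feasible set `Φ(u,θ)` of FOP. -/
def Feas {d m p q : ℕ} (g : Euc d → Euc m → Euc p → Fin q → ℝ)
    (u : Euc m) (θ : Euc p) : Set (Euc d) :=
  {x | ∀ j, g x u θ j ≤ 0}

/-- Solution set `S(u,θ)` of FOP. -/
def Sol {d m p q : ℕ} (f : Euc d → Euc m → Euc p → ℝ)
    (g : Euc d → Euc m → Euc p → Fin q → ℝ) (u : Euc m) (θ : Euc p) : Set (Euc d) :=
  {x ∈ Feas g u θ | ∀ x' ∈ Feas g u θ, f x u θ ≤ f x' u θ}

/-- The sample-average risk `Q_n(θ)` of RISK-SAA. -/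
def Qn {d m p q : ℕ} (f : Euc d → Euc m → Euc p → ℝ)
    (g : Euc d → Euc m → Euc p → Fin q → ℝ) (n : ℕ)
    (u : Fin n → Euc m) (y : Fin n → Euc d) (θ : Euc p) : ℝ :=
  sInf ((fun x : Fin n → Euc d => (1 / n : ℝ) * ∑ i, ‖y i - x i‖ ^ 2) ''
    {x | ∀ i, x i ∈ Sol f g (u i) θ})

/-- The regularized sample-average risk `Q_n(θ; ε)` of R-DB-RISK-SAA. -/
def QnR {d m p q : ℕ} (f : Euc d → Euc m → Euc p → ℝ)
    (g : Euc d → Euc m → Euc p → Fin q → ℝ) (n : ℕ)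
    (u : Fin n → Euc m) (y : Fin n → Euc d) (θ : Euc p) (ε : ℝ) : ℝ :=
  sInf ((fun x : Fin n → Euc d => (1 / n : ℝ) * ∑ i, ‖y i - x i‖ ^ 2) ''
    {x | ∀ i, (∀ j, g (x i) (u i) θ j ≤ ε) ∧
      ∃ lam : Fin q → ℝ, (∀ j, 0 ≤ lam j) ∧
        ∀ x' : Euc d, f (x i) (u i) θ ≤ f x' (u i) θ + ∑ j, lam j * g x' (u i) θ j + ε})



/-!
Suppose not. Then there are `θₖ ∈ Θ` that are `zₖ`-minimizers of `Q_n(·; εₖ)` with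
`zₖ, εₖ → 0` but stay at distance `≥ d` from `argmin Q_n`. Pick `εₖ`-KKT profiles `xₖ`
whose loss is within `1/(k+1)` of `Q_n(θₖ; εₖ)`. Strong duality under Slater's condition
gives `Q_n(θ; ε) ≤ Q_n(θ)`, which bounds the losses of the `xₖ`, so `(θₖ, xₖ)` has a
convergent subsequence with limit `(θ*, x*)`. A Slater point at `θ*` bounds the multipliers
of the `xₖ` uniformly, so the Lagrangian inequalities pass to the limit and each `x*ᵢ`
solves FOP at `(uᵢ, θ*)`. Hence `Q_n(θ*) ≤ loss(x*) ≤ Q_n(θ')` for every `θ' ∈ Θ`: `θ*` is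
a minimizer, a contradiction.
-/

open Topology

section StrongDuality

variable {E ι : Type*} {F : E → ℝ} {G : E → ι → ℝ}

def strictEpigraphImage (F : E → ℝ) (G : E → ι → ℝ) : Set ((ι → ℝ) × ℝ) :=
  {p | ∃ x, (∀ j, G x j < p.1 j) ∧ F x < p.2}

theorem isOpen_strictEpigraphImage [Finite ι] : IsOpen (strictEpigraphImage F G) := by
  have : strictEpigraphImage F G = ⋃ x, (univ.pi fun j => Ioi (G x j)) ×ˢ Ioi (F x) := by
    ext; simp [strictEpigraphImage]
  rw [this]
  exact isOpen_iUnion fun x =>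
    (isOpen_set_pi finite_univ fun _ _ => isOpen_Ioi).prod isOpen_Ioi

theorem combo_lt_combo {a b u v r s : ℝ} (ha : 0 ≤ a) (hb : 0 ≤ b) (hab : a + b = 1)
    (hu : u < r) (hv : v < s) : a * u + b * v < a * r + b * s := by
  rcases ha.eq_or_lt with rfl | ha
  · simp_all
  · nlinarith [mul_lt_mul_of_pos_left hu ha]

theorem convex_strictEpigraphImage [AddCommGroup E] [Module ℝ E] (hF : ConvexOn ℝ univ F)
    (hG : ∀ j, ConvexOn ℝ univ fun x => G x j) : Convex ℝ (strictEpigraphImage F G) := by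
  rintro p ⟨x, hGx, hFx⟩ p' ⟨x', hGx', hFx'⟩ a b ha hb hab
  refine ⟨a • x + b • x', fun j => ?_, ?_⟩
  · calc G (a • x + b • x') j ≤ a * G x j + b * G x' j :=
          (hG j).2 (mem_univ x) (mem_univ x') ha hb hab
      _ < a * p.1 j + b * p'.1 j := combo_lt_combo ha hb hab (hGx j) (hGx' j)
      _ = (a • p + b • p').1 j := by simp
  · calc F (a • x + b • x') ≤ a * F x + b * F x' := hF.2 (mem_univ x) (mem_univ x') ha hb hab
      _ < a * p.2 + b * p'.2 := combo_lt_combo ha hb hab hFx hFx'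
      _ = (a • p + b • p').2 := by simp

theorem mem_strictEpigraphImage_of_le {p p' : (ι → ℝ) × ℝ} (hp : p ∈ strictEpigraphImage F G)
    (hle : p ≤ p') : p' ∈ strictEpigraphImage F G :=
  let ⟨x, hGx, hFx⟩ := hp
  ⟨x, fun j => (hGx j).trans_le (hle.1 j), hFx.trans_le hle.2⟩

theorem nonpos_of_forall_pos_add_mul_lt {a b K : ℝ} (h : ∀ t > 0, a + t * b < K) : b ≤ 0 := by
  by_contra! hb
  have := h (|K - a| / b + 1) (by positivity)
  rw [add_mul, div_mul_cancel₀ _ hb.ne'] at this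
  linarith [le_abs_self (K - a)]

theorem le_of_forall_pos_add_mul_lt {a b K : ℝ} (h : ∀ t > 0, a + t * b < K) : a ≤ K := by
  have hlim : Tendsto (fun t => a + t * b) (𝓝[>] 0) (𝓝 a) :=
    ((continuous_const.add (continuous_id.mul continuous_const)).tendsto' 0 a
      (by simp)).mono_left nhdsWithin_le_nhds
  exact le_of_tendsto hlim (eventually_nhdsWithin_of_forall fun t ht => (h t ht).le)

theorem LinearMap.apply_prod_eq_sum [Fintype ι] [DecidableEq ι] (φ : (ι → ℝ) × ℝ →ₗ[ℝ] ℝ)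
    (r : ι → ℝ) (s : ℝ) : φ (r, s) = ∑ j, r j * φ (Pi.single j 1, 0) + s * φ (0, 1) := by
  have hr : φ (r, 0) = ∑ j, r j * φ (Pi.single j 1, 0) := by
    rw [show (r, (0 : ℝ)) = LinearMap.inl ℝ _ ℝ r from rfl, ← LinearMap.comp_apply,
      LinearMap.pi_apply_eq_sum_univ]
    refine Finset.sum_congr rfl fun j _ => ?_
    have : (fun k => if j = k then (1 : ℝ) else 0) = Pi.single j 1 := by
      ext k; simp [Pi.single_apply, eq_comm]
    simp [this]
  rw [← hr, ← smul_eq_mul s, ← map_smul, ← map_add]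
  simp

theorem exists_lagrange_multipliers_of_slater [AddCommGroup E] [Module ℝ E] [Fintype ι]
    (hF : ConvexOn ℝ univ F) (hG : ∀ j, ConvexOn ℝ univ fun x => G x j) {xs : E}
    (hmin : ∀ x, (∀ j, G x j ≤ 0) → F xs ≤ F x) {xb : E} (hxb : ∀ j, G xb j < 0) :
    ∃ lam : ι → ℝ, (∀ j, 0 ≤ lam j) ∧ ∀ x, F xs ≤ F x + ∑ j, lam j * G x j := by
  classical
  set C := strictEpigraphImage F G
  have hxs : ((0 : ι → ℝ), F xs) ∉ C := fun ⟨x, hGx, hFx⟩ =>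
    (hmin x fun j => (hGx j).le).not_gt hFx
  obtain ⟨φ, hφ⟩ := geometric_hahn_banach_open_point (convex_strictEpigraphImage hF hG)
    isOpen_strictEpigraphImage hxs
  set a : ι → ℝ := fun j => φ (Pi.single j 1, 0)
  set b : ℝ := φ (0, 1)
  have hφ_apply (r : ι → ℝ) (s : ℝ) : φ (r, s) = ∑ j, r j * a j + s * b :=
    φ.toLinearMap.apply_prod_eq_sum r s
  have hφ_zero (s : ℝ) : φ (0, s) = s * b := by simp [hφ_apply]
  -- `C` is upward closed and `φ` is bounded above on it, so `φ ≤ 0` on the positive cone.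
  have hcone (e : (ι → ℝ) × ℝ) (he : 0 ≤ e) : φ e ≤ 0 := by
    set c : (ι → ℝ) × ℝ := ((fun j => G xs j + 1), F xs + 1)
    have hc : c ∈ C := ⟨xs, fun j => by simp [c], by simp [c]⟩
    refine nonpos_of_forall_pos_add_mul_lt (a := φ c) (K := φ (0, F xs)) fun t ht => ?_
    have hle : c ≤ c + t • e := le_add_of_nonneg_right (smul_nonneg ht.le he)
    simpa using hφ _ (mem_strictEpigraphImage_of_le hc hle)
  have ha (j : ι) : a j ≤ 0 := hcone _ ⟨by simp, le_rfl⟩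
  -- Slater's condition enters here: `(0, F xb + 1) ∈ C` forces `b ≠ 0`.
  have hb : b < 0 := by
    have := hφ (0, F xb + 1) ⟨xb, by simpa using hxb, lt_add_one _⟩
    rw [hφ_zero, hφ_zero] at this
    exact (hcone (0, 1) ⟨le_rfl, zero_le_one⟩).lt_of_ne fun hb => by simp [b, hb] at this
  have hval (x : E) : ∑ j, G x j * a j + F x * b ≤ F xs * b := by
    refine le_of_forall_pos_add_mul_lt (b := φ 1) fun t ht => ?_
    have := hφ (((fun j => G x j), F x) + t • 1) ⟨x, fun j => by simp [ht], by simp [ht]⟩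
    rwa [map_add, map_smul, smul_eq_mul, hφ_zero, hφ_apply] at this
  refine ⟨fun j => a j / b, fun j => div_nonneg_of_nonpos (ha j) hb.le, fun x => ?_⟩
  have hsum : ∑ j, a j / b * G x j = (∑ j, G x j * a j) / b := by
    rw [Finset.sum_div]; exact Finset.sum_congr rfl fun j _ => by ring
  rw [hsum, ← sub_le_iff_le_add', le_div_iff_of_neg hb]
  linarith [hval x]

end StrongDuality

section ApproxKKT

variable {E ι : Type*} [Fintype ι]

-- The last clause is the duality-gap bound `F x - h(lam) ≤ ε` with the dual function `h`
-- unfolded as an infimum over `x'`.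
def IsApproxKKT (F : E → ℝ) (G : E → ι → ℝ) (ε : ℝ) (x : E) : Prop :=
  (∀ j, G x j ≤ ε) ∧
    ∃ lam : ι → ℝ, (∀ j, 0 ≤ lam j) ∧ ∀ x', F x ≤ F x' + ∑ j, lam j * G x' j + ε

theorem isApproxKKT_of_slater [AddCommGroup E] [Module ℝ E] {F : E → ℝ} {G : E → ι → ℝ}
    (hF : ConvexOn ℝ univ F) (hG : ∀ j, ConvexOn ℝ univ fun x => G x j) {xs : E}
    (hxs : ∀ j, G xs j ≤ 0) (hmin : ∀ x, (∀ j, G x j ≤ 0) → F xs ≤ F x) {xb : E}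
    (hxb : ∀ j, G xb j < 0) {ε : ℝ} (hε : 0 ≤ ε) : IsApproxKKT F G ε xs := by
  obtain ⟨lam, hlam, hdual⟩ := exists_lagrange_multipliers_of_slater hF hG hmin hxb
  exact ⟨fun j => (hxs j).trans hε, lam, hlam,
    fun x => (hdual x).trans (le_add_of_nonneg_right hε)⟩

theorem mul_sum_le_of_slater {F : E → ℝ} {G : E → ι → ℝ} {lam : ι → ℝ}
    (hlam : ∀ j, 0 ≤ lam j) {x xb : E} {ε η : ℝ} (hx : F x ≤ F xb + ∑ j, lam j * G xb j + ε)
    (hxb : ∀ j, G xb j ≤ -η) :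
    η * ∑ j, lam j ≤ F xb - F x + ε := by
  have : ∑ j, lam j * G xb j ≤ ∑ j, lam j * -η :=
    Finset.sum_le_sum fun j _ => mul_le_mul_of_nonneg_left (hxb j) (hlam j)
  rw [← Finset.sum_mul] at this
  linarith

theorem sum_mul_le_mul_sum_max {lam c : ι → ℝ} {L : ℝ} (hlam : ∀ j, 0 ≤ lam j)
    (hL : ∑ j, lam j ≤ L) : ∑ j, lam j * c j ≤ L * ∑ j, max (c j) 0 := by
  rw [Finset.mul_sum]
  refine Finset.sum_le_sum fun j _ => ?_
  have hlamL : lam j ≤ L := (Finset.single_le_sum (fun j _ => hlam j) (Finset.mem_univ j)).trans hL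
  calc lam j * c j ≤ lam j * max (c j) 0 := mul_le_mul_of_nonneg_left (le_max_left _ _) (hlam j)
    _ ≤ L * max (c j) 0 := mul_le_mul_of_nonneg_right hlamL (le_max_right _ _)

variable {P κ : Type*} [TopologicalSpace E] [TopologicalSpace P] {F : E → P → ℝ}
  {G : E → P → ι → ℝ} {l : Filter κ} {x : κ → E} {θ : κ → P} {ε : κ → ℝ} {x₀ : E} {θ₀ : P}

theorem exists_bound_multipliers_of_tendsto (hF : Continuous fun p : E × P => F p.1 p.2)
    (hG : ∀ j, Continuous fun p : E × P => G p.1 p.2 j) (hx : Tendsto x l (𝓝 x₀))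
    (hθ : Tendsto θ l (𝓝 θ₀)) (hε : Tendsto ε l (𝓝 0))
    (hkkt : ∀ᶠ k in l, IsApproxKKT (F · (θ k)) (G · (θ k)) (ε k) (x k)) {xb : E}
    (hxb : ∀ j, G xb θ₀ j < 0) :
    ∃ L, ∀ᶠ k in l, ∃ lam : ι → ℝ, (∀ j, 0 ≤ lam j) ∧ ∑ j, lam j ≤ L ∧
      ∀ x', F (x k) (θ k) ≤ F x' (θ k) + ∑ j, lam j * G x' (θ k) j + ε k := by
  obtain ⟨η, hηG, hη⟩ : ∃ η, (∀ j, G xb θ₀ j < -η) ∧ 0 < η := by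
    have : ∀ᶠ η in 𝓝 (0 : ℝ), ∀ j, G xb θ₀ j < -η := eventually_all.2 fun j =>
      (continuous_neg.tendsto' (0 : ℝ) 0 neg_zero).eventually (lt_mem_nhds (hxb j))
    exact ((this.filter_mono nhdsWithin_le_nhds).and self_mem_nhdsWithin).exists (f := 𝓝[>] 0)
  have hslater : ∀ᶠ k in l, ∀ j, G xb (θ k) j ≤ -η := eventually_all.2 fun j =>
    (((hG j).comp (continuous_const.prodMk continuous_id)).tendsto θ₀ |>.comp hθ).eventually
      (gt_mem_nhds (hηG j)) |>.mono fun _ => le_of_lt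
  have hgap : Tendsto (fun k => F xb (θ k) - F (x k) (θ k) + ε k) l
      (𝓝 (F xb θ₀ - F x₀ θ₀ + 0)) :=
    ((((hF.comp (continuous_const.prodMk continuous_id)).tendsto θ₀).comp hθ).sub
      ((hF.tendsto (x₀, θ₀)).comp (hx.prodMk_nhds hθ))).add hε
  -- Testing the Lagrangian inequality at the Slater point bounds `η * ∑ lam` by a convergent gap.
  refine ⟨(F xb θ₀ - F x₀ θ₀ + 1) / η, ?_⟩
  have hgap_lt : ∀ᶠ k in l, F xb (θ k) - F (x k) (θ k) + ε k < F xb θ₀ - F x₀ θ₀ + 1 :=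
    hgap.eventually (gt_mem_nhds (by linarith))
  filter_upwards [hkkt, hslater, hgap_lt] with k hkktk hslk hgapk
  obtain ⟨-, lam, hlam, hdual⟩ := hkktk
  refine ⟨lam, hlam, ?_, hdual⟩
  rw [le_div_iff₀ hη, mul_comm]
  exact (mul_sum_le_of_slater (F := (F · (θ k))) (G := (G · (θ k))) hlam (hdual xb) hslk).trans
    hgapk.le

theorem isMinOn_of_tendsto_isApproxKKT [l.NeBot] (hF : Continuous fun p : E × P => F p.1 p.2)
    (hG : ∀ j, Continuous fun p : E × P => G p.1 p.2 j) (hx : Tendsto x l (𝓝 x₀))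
    (hθ : Tendsto θ l (𝓝 θ₀)) (hε : Tendsto ε l (𝓝 0))
    (hkkt : ∀ᶠ k in l, IsApproxKKT (F · (θ k)) (G · (θ k)) (ε k) (x k)) {xb : E}
    (hxb : ∀ j, G xb θ₀ j < 0) :
    (∀ j, G x₀ θ₀ j ≤ 0) ∧ ∀ x', (∀ j, G x' θ₀ j ≤ 0) → F x₀ θ₀ ≤ F x' θ₀ := by
  have hF_at (x' : E) : Tendsto (fun k => F x' (θ k)) l (𝓝 (F x' θ₀)) :=
    ((hF.comp (continuous_const.prodMk continuous_id)).tendsto θ₀).comp hθ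
  have hG_at (x' : E) (j : ι) : Tendsto (fun k => G x' (θ k) j) l (𝓝 (G x' θ₀ j)) :=
    (((hG j).comp (continuous_const.prodMk continuous_id)).tendsto θ₀).comp hθ
  refine ⟨fun j => le_of_tendsto_of_tendsto (((hG j).tendsto (x₀, θ₀)).comp (hx.prodMk_nhds hθ))
    hε (hkkt.mono fun k hk => hk.1 j), fun x' hx' => ?_⟩
  obtain ⟨L, hL⟩ := exists_bound_multipliers_of_tendsto hF hG hx hθ hε hkkt hxb
  -- The bounded multipliers turn the Lagrangian into an exact penalty that vanishes at `θ₀`.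
  have hpen : Tendsto (fun k => F x' (θ k) + L * ∑ j, max (G x' (θ k) j) 0 + ε k) l
      (𝓝 (F x' θ₀ + L * ∑ j, max (G x' θ₀ j) 0 + 0)) :=
    ((hF_at x').add ((tendsto_finsetSum _ fun j _ =>
      (hG_at x' j).max tendsto_const_nhds).const_mul L)).add hε
  have hzero : ∑ j, max (G x' θ₀ j) 0 = 0 := Finset.sum_eq_zero fun j _ => max_eq_right (hx' j)
  rw [hzero, mul_zero, add_zero, add_zero] at hpen
  refine le_of_tendsto_of_tendsto ((hF.tendsto (x₀, θ₀)).comp (hx.prodMk_nhds hθ)) hpen ?_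
  filter_upwards [hL] with k hLk
  obtain ⟨lam, hlam, hsum, hdual⟩ := hLk
  show F (x k) (θ k) ≤ _
  linarith [hdual x', sum_mul_le_mul_sum_max (c := fun j => G x' (θ k) j) hlam hsum]

end ApproxKKT

section InverseOptimization

variable {d m p q n : ℕ} {f : Euc d → Euc m → Euc p → ℝ} {g : Euc d → Euc m → Euc p → Fin q → ℝ}
  {u : Fin n → Euc m} {y : Fin n → Euc d}

def sampleLoss (y x : Fin n → Euc d) : ℝ := (1 / n : ℝ) * ∑ i, ‖y i - x i‖ ^ 2

theorem sampleLoss_nonneg (y x : Fin n → Euc d) : 0 ≤ sampleLoss y x := by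
  unfold sampleLoss; positivity

theorem continuous_sampleLoss (y : Fin n → Euc d) : Continuous (sampleLoss y) :=
  continuous_const.mul <| continuous_finsetSum _ fun i _ =>
    ((continuous_const.sub (continuous_apply i)).norm.pow 2)

theorem dist_le_sqrt_of_sampleLoss_le {x : Fin n → Euc d} {C : ℝ} (h : sampleLoss y x ≤ C) :
    dist x y ≤ √(n * C) := by
  refine (dist_pi_le_iff (Real.sqrt_nonneg _)).2 fun i => ?_
  have hn : (0 : ℝ) < n := by exact_mod_cast i.pos
  have hsum : ∑ i, ‖y i - x i‖ ^ 2 ≤ n * C := by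
    rwa [sampleLoss, one_div, inv_mul_le_iff₀ hn] at h
  have hC : 0 ≤ C := (sampleLoss_nonneg y x).trans h
  rw [dist_comm, dist_eq_norm, Real.le_sqrt (norm_nonneg _) (mul_nonneg hn.le hC)]
  exact (Finset.single_le_sum (fun i _ => by positivity) (Finset.mem_univ i)).trans hsum

theorem sol_nonempty {uu : Euc m} {θ : Euc p} (hcpt : IsCompact (Feas g uu θ))
    (hne : (Feas g uu θ).Nonempty) (hf : Continuous fun x => f x uu θ) :
    (Sol f g uu θ).Nonempty :=
  let ⟨x, hx, hmin⟩ := hcpt.exists_isMinOn hne hf.continuousOn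
  ⟨x, hx, fun _ hx' => hmin hx'⟩

theorem qn_le_sampleLoss {θ : Euc p} {x : Fin n → Euc d} (hx : ∀ i, x i ∈ Sol f g (u i) θ) :
    Qn f g n u y θ ≤ sampleLoss y x :=
  csInf_le ⟨0, by rintro _ ⟨x, -, rfl⟩; exact sampleLoss_nonneg y x⟩ ⟨x, hx, rfl⟩

theorem qnR_nonneg {θ : Euc p} {ε : ℝ} : 0 ≤ QnR f g n u y θ ε :=
  Real.sInf_nonneg <| by rintro _ ⟨x, -, rfl⟩; exact sampleLoss_nonneg y x

theorem qnR_le_qn {θ : Euc p} {ε : ℝ} (hsol : ∀ i, (Sol f g (u i) θ).Nonempty)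
    (hkkt : ∀ i, ∀ x ∈ Sol f g (u i) θ, IsApproxKKT (f · (u i) θ) (g · (u i) θ) ε x) :
    QnR f g n u y θ ε ≤ Qn f g n u y θ :=
  csInf_le_csInf ⟨0, by rintro _ ⟨x, -, rfl⟩; exact sampleLoss_nonneg y x⟩
    ⟨_, ⟨fun i => (hsol i).some, fun i => (hsol i).some_mem, rfl⟩⟩
    (image_mono fun x hx i => hkkt i (x i) (hx i))

theorem exists_sampleLoss_lt_qnR_add {θ : Euc p} {ε δ : ℝ} (hδ : 0 < δ)
    (hne : ∃ x : Fin n → Euc d, ∀ i, IsApproxKKT (f · (u i) θ) (g · (u i) θ) ε (x i)) :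
    ∃ x : Fin n → Euc d, (∀ i, IsApproxKKT (f · (u i) θ) (g · (u i) θ) ε (x i)) ∧
      sampleLoss y x < QnR f g n u y θ ε + δ := by
  obtain ⟨x₀, hx₀⟩ := hne
  obtain ⟨_, ⟨x, hx, rfl⟩, hlt⟩ := Real.lt_sInf_add_pos
    (s := sampleLoss y '' {x | ∀ i, IsApproxKKT (f · (u i) θ) (g · (u i) θ) ε (x i)})
    ⟨_, x₀, hx₀, rfl⟩ hδ
  exact ⟨x, hx, hlt⟩

theorem sampleLoss_le_qn_add {Θ : Set (Euc p)} {θ θ' : Euc p} {ε z δ : ℝ}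
    {x : Fin n → Euc d} (hθ' : θ' ∈ Θ) (hsol : ∀ i, (Sol f g (u i) θ').Nonempty)
    (hkkt : ∀ i, ∀ x ∈ Sol f g (u i) θ', IsApproxKKT (f · (u i) θ') (g · (u i) θ') ε x)
    (hx : sampleLoss y x < QnR f g n u y θ ε + δ)
    (happrox : QnR f g n u y θ ε ≤ sInf ((fun θ' => QnR f g n u y θ' ε) '' Θ) + z) :
    sampleLoss y x ≤ Qn f g n u y θ' + (z + δ) := by
  have hinf : sInf ((fun θ' => QnR f g n u y θ' ε) '' Θ) ≤ QnR f g n u y θ' ε :=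
    csInf_le ⟨0, by rintro _ ⟨_, -, rfl⟩; exact qnR_nonneg⟩ (mem_image_of_mem _ hθ')
  linarith [qnR_le_qn (y := y) hsol hkkt]

theorem exists_mapClusterPt_argmin_qn {Θ : Set (Euc p)} (hΘ : IsCompact Θ)
    (hf : Continuous fun t : Euc d × Euc m × Euc p => f t.1 t.2.1 t.2.2)
    (hg : ∀ j, Continuous fun t : Euc d × Euc m × Euc p => g t.1 t.2.1 t.2.2 j)
    (hsol : ∀ i, ∀ θ ∈ Θ, (Sol f g (u i) θ).Nonempty)
    (hkkt : ∀ i, ∀ θ ∈ Θ, ∀ x ∈ Sol f g (u i) θ, ∀ ε, 0 ≤ ε →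
      IsApproxKKT (f · (u i) θ) (g · (u i) θ) ε x)
    (hslater : ∀ i, ∀ θ ∈ Θ, ∃ xb, ∀ j, g xb (u i) θ j < 0)
    {θ : ℕ → Euc p} {ε z : ℕ → ℝ} (hθ : ∀ k, θ k ∈ Θ) (hε0 : ∀ k, 0 ≤ ε k)
    (hε : Tendsto ε atTop (𝓝 0)) (hz : Tendsto z atTop (𝓝 0))
    (happrox : ∀ k, QnR f g n u y (θ k) (ε k) ≤
      sInf ((fun θ' => QnR f g n u y θ' (ε k)) '' Θ) + z k) :
    ∃ θ₀ ∈ {θ ∈ Θ | ∀ θ' ∈ Θ, Qn f g n u y θ ≤ Qn f g n u y θ'},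
      MapClusterPt θ₀ atTop θ := by
  have hpick (k : ℕ) : ∃ x : Fin n → Euc d,
      (∀ i, IsApproxKKT (f · (u i) (θ k)) (g · (u i) (θ k)) (ε k) (x i)) ∧
        sampleLoss y x < QnR f g n u y (θ k) (ε k) + 1 / (k + 1) :=
    exists_sampleLoss_lt_qnR_add Nat.one_div_pos_of_nat ⟨fun i => (hsol i _ (hθ k)).some,
      fun i => hkkt i _ (hθ k) _ (hsol i _ (hθ k)).some_mem _ (hε0 k)⟩
  choose x hxkkt hxloss using hpick
  set δ : ℕ → ℝ := fun k => z k + 1 / (k + 1)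
  have hδ : Tendsto δ atTop (𝓝 0) := by
    simpa [δ] using hz.add tendsto_one_div_add_atTop_nhds_zero_nat
  have hloss (θ' : Euc p) (hθ' : θ' ∈ Θ) (k : ℕ) :
      sampleLoss y (x k) ≤ Qn f g n u y θ' + δ k :=
    sampleLoss_le_qn_add hθ' (hsol · θ' hθ') (fun i x hx => hkkt i θ' hθ' x hx _ (hε0 k))
      (hxloss k) (happrox k)
  obtain ⟨B, hB⟩ := hδ.bddAbove_range
  have hball (k : ℕ) : x k ∈ closedBall y √(n * (Qn f g n u y (θ 0) + B)) :=
    dist_le_sqrt_of_sampleLoss_le <| (hloss _ (hθ 0) k).trans <|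
      add_le_add_right (hB ⟨k, rfl⟩) _
  obtain ⟨⟨θ₀, x₀⟩, ⟨hθ₀, -⟩, ψ, hψ, hlim⟩ := (hΘ.prod (isCompact_closedBall _ _)).tendsto_subseq
    (x := fun k => (θ k, x k)) fun k => ⟨hθ k, hball k⟩
  have hθlim : Tendsto (θ ∘ ψ) atTop (𝓝 θ₀) := hlim.fst_nhds
  have hxlim : Tendsto (x ∘ ψ) atTop (𝓝 x₀) := hlim.snd_nhds
  have hx₀ (i : Fin n) : x₀ i ∈ Sol f g (u i) θ₀ := by
    obtain ⟨xb, hxb⟩ := hslater i θ₀ hθ₀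
    exact isMinOn_of_tendsto_isApproxKKT (F := (f · (u i) ·)) (G := (g · (u i) ·))
      (hf.comp (continuous_fst.prodMk (continuous_const.prodMk continuous_snd)))
      (fun j => (hg j).comp (continuous_fst.prodMk (continuous_const.prodMk continuous_snd)))
      (((continuous_apply i).tendsto x₀).comp hxlim) hθlim (hε.comp hψ.tendsto_atTop)
      (Eventually.of_forall fun k => hxkkt (ψ k) i) hxb
  refine ⟨θ₀, ⟨hθ₀, fun θ' hθ' => (qn_le_sampleLoss hx₀).trans ?_⟩,
    hθlim.mapClusterPt.of_comp hψ.tendsto_atTop⟩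
  simpa using le_of_tendsto_of_tendsto' (((continuous_sampleLoss y).tendsto x₀).comp hxlim)
    (tendsto_const_nhds.add (hδ.comp hψ.tendsto_atTop)) fun k => hloss θ' hθ' (ψ k)

end InverseOptimization

theorem statement6_general {d m p q : ℕ} (n : ℕ)
    (f : Euc d → Euc m → Euc p → ℝ) (g : Euc d → Euc m → Euc p → Fin q → ℝ)
    (𝒰 : Set (Euc m)) (Θ : Set (Euc p))
    (hf_cont : Continuous fun t : Euc d × Euc m × Euc p => f t.1 t.2.1 t.2.2)
    (hg_cont : ∀ j, Continuous fun t : Euc d × Euc m × Euc p => g t.1 t.2.1 t.2.2 j)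
    (hf_conv : ∀ (uu : Euc m) (θθ : Euc p), ConvexOn ℝ Set.univ fun x => f x uu θθ)
    (hg_conv : ∀ (uu : Euc m) (θθ : Euc p) (j : Fin q),
      ConvexOn ℝ Set.univ fun x => g x uu θθ j)
    (hΘcpt : IsCompact Θ)
    (hR1 : ∀ uu ∈ 𝒰, ∀ θθ ∈ Θ, IsCompact (Feas g uu θθ) ∧
      ∃ xb ∈ Feas g uu θθ, ∀ j, g xb uu θθ j < 0)
    (u : Fin n → Euc m) (y : Fin n → Euc d) (hu : ∀ i, u i ∈ 𝒰) :
    ∀ dd > (0 : ℝ), ∃ E > (0 : ℝ), ∃ Z > (0 : ℝ),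
      ∀ z, 0 ≤ z → z ≤ Z → ∀ ε, 0 ≤ ε → ε ≤ E →
        ∀ θh ∈ Θ,
          QnR f g n u y θh ε ≤ sInf ((fun θ' => QnR f g n u y θ' ε) '' Θ) + z →
          Metric.infDist θh {θ ∈ Θ | ∀ θ' ∈ Θ, Qn f g n u y θ ≤ Qn f g n u y θ'} < dd := by
  intro dd hdd
  have hslater i θ (hθ : θ ∈ Θ) : ∃ xb, ∀ j, g xb (u i) θ j < 0 :=
    let ⟨_, xb, _, hxb⟩ := hR1 (u i) (hu i) θ hθ
    ⟨xb, hxb⟩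
  have hsol i θ (hθ : θ ∈ Θ) : (Sol f g (u i) θ).Nonempty :=
    let ⟨hcpt, xb, hxb, _⟩ := hR1 (u i) (hu i) θ hθ
    sol_nonempty hcpt ⟨xb, hxb⟩
      (hf_cont.comp (continuous_id.prodMk continuous_const : Continuous fun x => (x, u i, θ)))
  have hkkt i θ (hθ : θ ∈ Θ) x (hx : x ∈ Sol f g (u i) θ) ε (hε : 0 ≤ ε) :
      IsApproxKKT (f · (u i) θ) (g · (u i) θ) ε x :=
    let ⟨xb, hxb⟩ := hslater i θ hθ
    isApproxKKT_of_slater (hf_conv _ _) (hg_conv _ _) hx.1 hx.2 hxb hε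
  by_contra! hfar
  choose z hz0 hzk ε hε0 hεk θ hθ happrox hdist using fun k : ℕ =>
    hfar (1 / (k + 1)) Nat.one_div_pos_of_nat (1 / (k + 1)) Nat.one_div_pos_of_nat
  obtain ⟨θ₀, hθ₀, hclust⟩ := exists_mapClusterPt_argmin_qn hΘcpt hf_cont hg_cont hsol hkkt
    hslater hθ hε0 (squeeze_zero hε0 hεk tendsto_one_div_add_atTop_nhds_zero_nat)
    (squeeze_zero hz0 hzk tendsto_one_div_add_atTop_nhds_zero_nat) happrox
  have hfar₀ : dd ≤ infDist θ₀ _ := (isClosed_le continuous_const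
    (continuous_infDist_pt _)).mem_of_mapClusterPt hclust (Eventually.of_forall hdist)
  rw [infDist_zero_of_mem hθ₀] at hfar₀
  linarith

/-- Corollary 2 of Aswani–Shen–Siddiq: under A1, A2, R1 (with joint continuity and
compact `Θ`), for any `d > 0` there exist `E, Z > 0` such that any `z`-approximate
minimizer of `Q_n(·; ε)` (over `Θ`) with `0 ≤ z ≤ Z` and `0 ≤ ε ≤ E` is within
distance `d` of the argmin set of `Q_n` over `Θ`. -/
theorem statement6 {d m p q : ℕ} (n : ℕ)
    (f : Euc d → Euc m → Euc p → ℝ) (g : Euc d → Euc m → Euc p → Fin q → ℝ)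
    (𝒰 : Set (Euc m)) (Θ : Set (Euc p))
    (hf_cont : Continuous fun t : Euc d × Euc m × Euc p => f t.1 t.2.1 t.2.2)
    (hg_cont : ∀ j, Continuous fun t : Euc d × Euc m × Euc p => g t.1 t.2.1 t.2.2 j)
    (hf_conv : ∀ (uu : Euc m) (θθ : Euc p), ConvexOn ℝ Set.univ fun x => f x uu θθ)
    (hg_conv : ∀ (uu : Euc m) (θθ : Euc p) (j : Fin q),
      ConvexOn ℝ Set.univ fun x => g x uu θθ j)
    (hΘ : Convex ℝ Θ) (hΘcpt : IsCompact Θ)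
    (hR1 : ∀ uu ∈ 𝒰, ∀ θθ ∈ Θ, IsCompact (Feas g uu θθ) ∧
      ∃ xb ∈ Feas g uu θθ, ∀ j, g xb uu θθ j < 0)
    (hR1bd : ∃ M > 0, ∀ uu ∈ 𝒰, ∀ θθ ∈ Θ, ∀ x ∈ Feas g uu θθ, ‖x‖ ≤ M)
    (u : Fin n → Euc m) (y : Fin n → Euc d) (hu : ∀ i, u i ∈ 𝒰) :
    ∀ dd > (0 : ℝ), ∃ E > (0 : ℝ), ∃ Z > (0 : ℝ),
      ∀ z, 0 ≤ z → z ≤ Z → ∀ ε, 0 ≤ ε → ε ≤ E →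
        ∀ θh ∈ Θ,
          QnR f g n u y θh ε ≤ sInf ((fun θ' => QnR f g n u y θ' ε) '' Θ) + z →
          Metric.infDist θh {θ ∈ Θ | ∀ θ' ∈ Θ, Qn f g n u y θ ≤ Qn f g n u y θ'} < dd :=
  statement6_general n f g 𝒰 Θ hf_cont hg_cont hf_conv hg_conv hΘcpt hR1 u y hu
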